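/- The relation ≤_pl of non-uniform polynomial-length reducibility on Boolean function families is reflexive and transitive. -/

import Mathlib

/-- Boolean register names: `inp i` is input register `in:(i+1)`,
`aux i` is auxiliary register `aux:(i+1)`, `out` is the output register. -/
inductive Reg where
  | inp : ℕ → Reg
  | aux : ℕ → Reg
  | out : Reg
deriving DecidableEq

/-- Basic instructions: register reads/writes, and (for splitting instruction
sequences) `split p` and `reply p` for Boolean parameters `p`. -/
inductive BInstr where
  | get : Reg → BInstr
  | set : Reg → Bool → BInstr
  | split : ℕ → BInstr
  | reply : ℕ → BInstr
deriving DecidableEq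

/-- Primitive instructions. -/
inductive PInstr where
  | plain : BInstr → PInstr
  | pos : BInstr → PInstr
  | neg : BInstr → PInstr
  | jump : ℕ → PInstr
  | halt : PInstr
deriving DecidableEq

abbrev RegState := Reg → Bool

/-- State change caused by processing a basic instruction. -/
def BInstr.effect : BInstr → RegState → RegState
  | .set r b, s => Function.update s r b
  | _, s => s

/-- Reply produced by processing a basic instruction. -/
def BInstr.rpl : BInstr → RegState → Bool
  | .get r, s => s r
  | .set _ b, _ => b
  | _, _ => false

def BInstr.isSplitReply : BInstr → Bool
  | .split _ => true
  | .reply _ => true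
  | _ => false

/-- Single-thread execution of an instruction sequence on Boolean registers;
`none` means deadlock, `some s` means termination in register state `s`.
(`split`/`reply` instructions make no sense here and deadlock.) -/
def exec : List PInstr → RegState → Option RegState
  | [], _ => none
  | .plain a :: X, s =>
      if a.isSplitReply then none else exec X (a.effect s)
  | .pos a :: X, s =>
      if a.isSplitReply then none
      else if a.rpl s then exec X (a.effect s) else exec (X.drop 1) (a.effect s)
  | .neg a :: X, s =>
      if a.isSplitReply then none
      else if a.rpl s then exec (X.drop 1) (a.effect s) else exec X (a.effect s)
  | .jump 0 :: _, _ => none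
  | .jump (l+1) :: X, s => exec (X.drop l) s
  | .halt :: _, s => some s
termination_by X _ => X.length
decreasing_by all_goals (simp only [List.length_drop, List.length_cons]; omega)

/-- Initial register state: input registers `in:1 .. in:n` contain
`b 0, ..., b (n-1)`; all other registers contain `false`. -/
def initState (n : ℕ) (b : Fin n → Bool) : RegState := fun r =>
  match r with
  | .inp i => if h : i < n then b ⟨i, h⟩ else false
  | _ => false

/-- `X` computes the `n`-ary Boolean function `f`: for every input, execution
terminates (does not deadlock) with the output register containing `f b`. -/
def Computes {n : ℕ} (f : (Fin n → Bool) → Bool) (X : List PInstr) : Prop :=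
  ∀ b : Fin n → Bool, ∃ s : RegState,
    exec X (initState n b) = some s ∧ s Reg.out = f b

/-- Basic instructions allowed in `IS_br`. -/
def BrBasic : BInstr → Prop
  | .get (.inp _) => True
  | .get (.aux _) => True
  | .set (.aux _) _ => True
  | .set .out _ => True
  | _ => False

/-- Basic instructions allowed in `IS_br^na`. -/
def NaBasic : BInstr → Prop
  | .get (.inp _) => True
  | .set .out _ => True
  | _ => False

def InstrBasicOK (P : BInstr → Prop) : PInstr → Prop
  | .plain a => P a
  | .pos a => P a
  | .neg a => P a
  | _ => True

/-- Membership of `IS_br` (non-empty, only allowed basic instructions). -/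
def ISbr (X : List PInstr) : Prop :=
  X ≠ [] ∧ ∀ u ∈ X, InstrBasicOK BrBasic u

/-- Membership of `IS_br^na`. -/
def ISbrna (X : List PInstr) : Prop :=
  X ≠ [] ∧ ∀ u ∈ X, InstrBasicOK NaBasic u

/-- The primitive instruction contains the basic instruction `out.set:false`. -/
def UsesOutSetFalse : PInstr → Prop
  | .plain (.set .out false) => True
  | .pos (.set .out false) => True
  | .neg (.set .out false) => True
  | _ => False

/-- The class PLIS of Boolean function families computable by
polynomial-length instruction sequences from `IS_br`. -/
def PLIS (F : (n : ℕ) → (Fin n → Bool) → Bool) : Prop :=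
  ∃ h : Polynomial ℕ, ∀ n : ℕ, ∃ X : List PInstr,
    ISbr X ∧ Computes (F n) X ∧ X.length ≤ h.eval n

/-- `f` is length-`l` reducible to `g`. -/
def LengthRed (l : ℕ) {n m : ℕ} (f : (Fin n → Bool) → Bool)
    (g : (Fin m → Bool) → Bool) : Prop :=
  ∃ h : Fin m → (Fin n → Bool) → Bool,
    (∀ j : Fin m, ∃ X : List PInstr, ISbr X ∧ Computes (h j) X ∧ X.length ≤ l) ∧
    ∀ b : Fin n → Bool, f b = g (fun j => h j b)

/-- Non-uniform polynomial-length reducibility of Boolean function families. -/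
def PLRed (F G : (n : ℕ) → (Fin n → Bool) → Bool) : Prop :=
  ∃ q : Polynomial ℕ, ∀ n : ℕ, ∃ l m : ℕ,
    l ≤ q.eval n ∧ m ≤ q.eval n ∧ LengthRed l (F n) (G m)

/-!
Reflexivity: `f` reduces to itself through the projections `b ↦ b j`, each computed by the
three instructions `+in:j.get ; out.set:true ; !`.

Transitivity is substitution. Suppose `f` reduces to `g` of arity `m` through `h₁, …, hₘ`,
computed by programs of length `≤ l₁`, and `g` reduces to `e` through programs of length `≤ l₂`.
Run copies of the programs for the `hⱼ` one after the other, each with its `!` replaced by a jump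
past its end and its output and auxiliary registers moved to a private, initially false block of
auxiliary registers; afterwards the values `hⱼ(b)` sit in auxiliary registers, from which a copy
of a program reducing `g` reads its inputs. The result has length `≤ m l₁ + l₂`, and the
polynomial bounds compose.
-/

namespace PInstr

def effect : PInstr → RegState → RegState
  | .plain a | .pos a | .neg a => a.effect
  | _ => id

/-- The number of following instructions skipped, `none` on deadlock; meaningless at `!`. -/
def skip : PInstr → RegState → Option ℕ
  | .plain a, _ => if a.isSplitReply then none else some 0
  | .pos a, s => if a.isSplitReply then none else some (if a.rpl s then 0 else 1)
  | .neg a, s => if a.isSplitReply then none else some (if a.rpl s then 1 else 0)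
  | .jump 0, _ => none
  | .jump (l + 1), _ => some l
  | .halt, _ => none

end PInstr

theorem exec_cons {u : PInstr} (hu : u ≠ .halt) (X : List PInstr) (s : RegState) :
    exec (u :: X) s = (u.skip s).bind fun k => exec (X.drop k) (u.effect s) := by
  cases u with
  | plain a | pos a | neg a =>
    rw [exec]; simp only [PInstr.skip, PInstr.effect]; split_ifs <;> rfl
  | jump l => cases l <;> rw [exec] <;> rfl
  | halt => exact absurd rfl hu

theorem exec_induction {motive : List PInstr → RegState → RegState → Prop}
    (halt : ∀ X s, motive (.halt :: X) s s)
    (step : ∀ u X s k t, u ≠ .halt → u.skip s = some k →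
      exec (X.drop k) (u.effect s) = some t → motive (X.drop k) (u.effect s) t →
      motive (u :: X) s t) :
    ∀ X s t, exec X s = some t → motive X s t
  | [], s, t, h => by simp [exec] at h
  | u :: X, s, t, h => by
    by_cases hu : u = .halt
    · subst hu
      rw [exec, Option.some_inj] at h
      exact h ▸ halt X s
    · rw [exec_cons hu] at h
      obtain ⟨k, hk, hX⟩ := Option.bind_eq_some_iff.mp h
      exact step u X s k t hu hk hX (exec_induction halt step _ _ _ hX)
termination_by X => X.length
decreasing_by simp only [List.length_drop, List.length_cons]; omega

theorem exec_frame {r : Reg} {X : List PInstr} (hX : ∀ u ∈ X, ∀ s, u.effect s r = s r)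
    {s t : RegState} (h : exec X s = some t) : t r = s r := by
  revert hX
  refine exec_induction (motive := fun X s t => (∀ u ∈ X, ∀ s, u.effect s r = s r) → t r = s r)
    (fun _ _ _ => rfl) ?_ X s t h
  intro u X s k t _ _ _ ih hX
  rw [ih fun v hv => hX v (List.mem_cons_of_mem _ (List.drop_subset _ _ hv)),
    hX u List.mem_cons_self]

section Rename

open Function

variable {ρ : Reg → Reg}

def BInstr.rename (ρ : Reg → Reg) : BInstr → BInstr
  | .get r => .get (ρ r)
  | .set r b => .set (ρ r) b
  | .split p => .split p
  | .reply p => .reply p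

def PInstr.rename (ρ : Reg → Reg) : PInstr → PInstr
  | .plain a => .plain (a.rename ρ)
  | .pos a => .pos (a.rename ρ)
  | .neg a => .neg (a.rename ρ)
  | .jump l => .jump l
  | .halt => .halt

theorem BInstr.rpl_rename (a : BInstr) (s : RegState) : (a.rename ρ).rpl s = a.rpl (s ∘ ρ) := by
  cases a <;> rfl

theorem BInstr.isSplitReply_rename (a : BInstr) : (a.rename ρ).isSplitReply = a.isSplitReply := by
  cases a <;> rfl

theorem BInstr.effect_rename (hρ : Injective ρ) (a : BInstr) (s : RegState) :
    (a.rename ρ).effect s ∘ ρ = a.effect (s ∘ ρ) := by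
  cases a with
  | set r b => exact update_comp_eq_of_injective s hρ r b
  | _ => rfl

theorem BInstr.effect_rename_of_notMem_range {r : Reg} (hr : r ∉ Set.range ρ) (a : BInstr)
    (s : RegState) : (a.rename ρ).effect s r = s r := by
  cases a with
  | set r' b => exact update_of_ne (fun h => hr ⟨r', h.symm⟩) _ _
  | _ => rfl

theorem PInstr.skip_rename (u : PInstr) (s : RegState) : (u.rename ρ).skip s = u.skip (s ∘ ρ) := by
  cases u with
  | plain a | pos a | neg a =>
    simp only [PInstr.rename, PInstr.skip, BInstr.isSplitReply_rename, BInstr.rpl_rename]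
  | jump l => cases l <;> rfl
  | halt => rfl

theorem PInstr.effect_rename (hρ : Injective ρ) (u : PInstr) (s : RegState) :
    (u.rename ρ).effect s ∘ ρ = u.effect (s ∘ ρ) := by
  cases u with
  | plain a | pos a | neg a => exact a.effect_rename hρ s
  | _ => rfl

theorem PInstr.effect_rename_of_notMem_range {r : Reg} (hr : r ∉ Set.range ρ) (u : PInstr)
    (s : RegState) : (u.rename ρ).effect s r = s r := by
  cases u with
  | plain a | pos a | neg a => exact a.effect_rename_of_notMem_range hr s
  | _ => rfl

theorem PInstr.rename_ne_halt {u : PInstr} (hu : u ≠ .halt) : u.rename ρ ≠ .halt := by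
  cases u <;> simp_all [PInstr.rename]

theorem PInstr.instrBasicOK_rename {P : BInstr → Prop} (hP : ∀ a, P a → P (a.rename ρ))
    {u : PInstr} (hu : InstrBasicOK P u) : InstrBasicOK P (u.rename ρ) := by
  cases u <;> first | exact hP _ hu | trivial

theorem exec_rename (hρ : Injective ρ) {X : List PInstr} {s : RegState} {t₁ : RegState}
    (h : exec X (s ∘ ρ) = some t₁) :
    ∃ t, exec (X.map (PInstr.rename ρ)) s = some t ∧ t ∘ ρ = t₁ := by
  suffices ∀ X s₁ t₁, exec X s₁ = some t₁ → ∀ s, s ∘ ρ = s₁ →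
      ∃ t, exec (X.map (PInstr.rename ρ)) s = some t ∧ t ∘ ρ = t₁ from this X _ t₁ h s rfl
  refine exec_induction (fun X s₁ s hs => ⟨s, by rw [List.map_cons, PInstr.rename, exec], hs⟩) ?_
  rintro u X _ k t₁ hu hk - ih s rfl
  obtain ⟨t, ht, htρ⟩ := ih _ (u.effect_rename hρ s)
  refine ⟨t, ?_, htρ⟩
  rw [List.map_cons, exec_cons (PInstr.rename_ne_halt hu), PInstr.skip_rename, hk,
    Option.bind_some, ← List.map_drop, ht]

end Rename

/-- Replaces each `!` by a jump to the first instruction after the sequence. -/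
def haltToJump : List PInstr → List PInstr
  | [] => []
  | u :: X => (if u = .halt then .jump (X.length + 1) else u) :: haltToJump X

@[simp] theorem length_haltToJump (X : List PInstr) : (haltToJump X).length = X.length := by
  induction X <;> simp_all [haltToJump]

theorem haltToJump_drop (X : List PInstr) (k : ℕ) :
    (haltToJump X).drop k = haltToJump (X.drop k) := by
  induction X generalizing k with
  | nil => simp [haltToJump]
  | cons u X ih => cases k <;> simp [haltToJump, ih]

theorem instrBasicOK_of_mem_haltToJump {P : BInstr → Prop} {X : List PInstr}
    (hX : ∀ u ∈ X, InstrBasicOK P u) : ∀ u ∈ haltToJump X, InstrBasicOK P u := by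
  induction X with
  | nil => simp [haltToJump]
  | cons v X ih =>
    simp only [haltToJump, List.mem_cons, forall_eq_or_imp] at hX ⊢
    refine ⟨?_, ih hX.2⟩
    split_ifs
    · trivial
    · exact hX.1

def FallsThrough (Z : List PInstr) (s t : RegState) : Prop :=
  ∀ rest, exec (Z ++ rest) s = exec rest t

theorem FallsThrough.nil (s : RegState) : FallsThrough [] s s := fun _ => rfl

theorem FallsThrough.append {Z₁ Z₂ : List PInstr} {s t u : RegState}
    (h₁ : FallsThrough Z₁ s t) (h₂ : FallsThrough Z₂ t u) : FallsThrough (Z₁ ++ Z₂) s u :=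
  fun rest => by rw [List.append_assoc, h₁, h₂]

theorem fallsThrough_haltToJump {X : List PInstr} {s t : RegState} (h : exec X s = some t) :
    FallsThrough (haltToJump X) s t := by
  refine exec_induction (motive := fun X s t => FallsThrough (haltToJump X) s t)
    (fun X s rest => ?_) (fun u X s k t hu hk hX ih rest => ?_) X s t h
  · rw [haltToJump, if_pos rfl, List.cons_append, exec,
      List.drop_left' (length_haltToJump X)]
  · have hkX : k ≤ X.length := by
      by_contra! hlt
      rw [List.drop_eq_nil_of_le hlt.le, exec] at hX
      cases hX
    rw [haltToJump, if_neg hu, List.cons_append, exec_cons hu, hk, Option.bind_some,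
      List.drop_append_of_le_length (by simpa using hkX), haltToJump_drop, ih]

theorem exists_fallsThrough_rename {ρ : Reg → Reg} (hρ : Function.Injective ρ) {X : List PInstr}
    {s t₁ : RegState} (h : exec X (s ∘ ρ) = some t₁) :
    ∃ t, FallsThrough (haltToJump (X.map (PInstr.rename ρ))) s t ∧ t ∘ ρ = t₁ ∧
      ∀ r ∉ Set.range ρ, t r = s r := by
  obtain ⟨t, ht, htρ⟩ := exec_rename hρ h
  refine ⟨t, fallsThrough_haltToJump ht, htρ, fun r hr => exec_frame ?_ ht⟩
  simp only [List.mem_map]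
  rintro _ ⟨u, -, rfl⟩ s
  exact u.effect_rename_of_notMem_range hr s

theorem PInstr.effect_inp_of_instrBasicOK {u : PInstr} (hu : InstrBasicOK BrBasic u)
    (s : RegState) (i : ℕ) : u.effect s (.inp i) = s (.inp i) := by
  rcases u with a | a | a | _ | _ <;> try rfl
  all_goals rcases a with _ | ⟨_ | _ | _, _⟩ | _ | _ <;> first | rfl | exact hu.elim

/-! Register layout of the composed program: the `j`-th inner program keeps its `out` and
`aux i` in `aux (pair j 0)` and `aux (pair j (i + 1))`; the outer program reads its `inp i`
from `aux (pair i 0)` and keeps its own `aux i` in the otherwise unused block `m`. -/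

def blockReg (j : ℕ) : Reg → Reg
  | .inp i => .inp i
  | .aux i => .aux (Nat.pair j (i + 1))
  | .out => .aux (Nat.pair j 0)

def outerReg (m : ℕ) : Reg → Reg
  | .inp i => .aux (Nat.pair i 0)
  | .aux i => .aux (Nat.pair m (i + 1))
  | .out => .out

theorem blockReg_injective (j : ℕ) : Function.Injective (blockReg j) := by
  intro r r' h
  cases r <;> cases r' <;> simp_all [blockReg]

theorem outerReg_injective (m : ℕ) : Function.Injective (outerReg m) := by
  intro r r' h
  cases r <;> cases r' <;> simp_all [outerReg]

theorem aux_pair_notMem_range_blockReg {j k : ℕ} (h : j ≠ k) (i : ℕ) :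
    Reg.aux (Nat.pair j i) ∉ Set.range (blockReg k) := by
  rintro ⟨r, hr⟩
  cases r <;> simp_all [blockReg, Nat.pair_eq_pair, eq_comm]

theorem out_notMem_range_blockReg (k : ℕ) : Reg.out ∉ Set.range (blockReg k) := by
  rintro ⟨r, hr⟩
  cases r <;> simp [blockReg] at hr

theorem brBasic_rename_blockReg (j : ℕ) (a : BInstr) (ha : BrBasic a) :
    BrBasic (a.rename (blockReg j)) := by
  rcases a with ⟨_ | _ | _⟩ | ⟨_ | _ | _, _⟩ | _ | _ <;> first | exact ha.elim | trivial

theorem brBasic_rename_outerReg (m : ℕ) (a : BInstr) (ha : BrBasic a) :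
    BrBasic (a.rename (outerReg m)) := by
  rcases a with ⟨_ | _ | _⟩ | ⟨_ | _ | _, _⟩ | _ | _ <;> first | exact ha.elim | trivial

def blocks (Y : ℕ → List PInstr) : ℕ → List PInstr
  | 0 => []
  | k + 1 => blocks Y k ++ haltToJump ((Y k).map (PInstr.rename (blockReg k)))

theorem length_blocks_le {Y : ℕ → List PInstr} {l k : ℕ} (hY : ∀ j < k, (Y j).length ≤ l) :
    (blocks Y k).length ≤ k * l := by
  induction k with
  | zero => simp [blocks]
  | succ k ih =>
    simp only [blocks, List.length_append, length_haltToJump, List.length_map, Nat.succ_mul]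
    exact Nat.add_le_add (ih fun j hj => hY j (by omega)) (hY k k.lt_succ_self)

theorem instrBasicOK_of_mem_blocks {Y : ℕ → List PInstr} {k : ℕ}
    (hY : ∀ j < k, ∀ u ∈ Y j, InstrBasicOK BrBasic u) :
    ∀ u ∈ blocks Y k, InstrBasicOK BrBasic u := by
  induction k with
  | zero => simp [blocks]
  | succ k ih =>
    simp only [blocks, List.mem_append]
    rintro u (hu | hu)
    · exact ih (fun j hj => hY j (by omega)) u hu
    · refine instrBasicOK_of_mem_haltToJump ?_ u hu
      simp only [List.mem_map]
      rintro _ ⟨v, hv, rfl⟩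
      exact v.instrBasicOK_rename (brBasic_rename_blockReg k) (hY k k.lt_succ_self v hv)

/-- The invariant after the first `k` blocks on input `b`; `v j` is the output of the `j`-th
inner program. -/
def AfterBlocks {n : ℕ} (b : Fin n → Bool) (v : ℕ → Bool) (k : ℕ) (s : RegState) : Prop :=
  (∀ i, s (.inp i) = initState n b (.inp i)) ∧ s .out = false ∧
  (∀ j < k, s (.aux (Nat.pair j 0)) = v j) ∧ ∀ j ≥ k, ∀ i, s (.aux (Nat.pair j i)) = false

theorem afterBlocks_zero {n : ℕ} (b : Fin n → Bool) (v : ℕ → Bool) :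
    AfterBlocks b v 0 (initState n b) :=
  ⟨fun _ => rfl, rfl, fun _ h => absurd h (Nat.not_lt_zero _), fun _ _ _ => rfl⟩

theorem AfterBlocks.comp_blockReg {n : ℕ} {b : Fin n → Bool} {v : ℕ → Bool} {k : ℕ}
    {s : RegState} (hs : AfterBlocks b v k s) : s ∘ blockReg k = initState n b := by
  obtain ⟨hinp, -, -, hfree⟩ := hs
  funext r
  cases r with
  | inp i => exact hinp i
  | aux i => exact hfree k le_rfl (i + 1)
  | out => exact hfree k le_rfl 0

theorem AfterBlocks.comp_outerReg {n m : ℕ} {b : Fin n → Bool} {v : ℕ → Bool} {s : RegState}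
    (hs : AfterBlocks b v m s) : s ∘ outerReg m = initState m fun j => v j := by
  obtain ⟨-, hout, hdone, hfree⟩ := hs
  funext r
  cases r with
  | inp i =>
    by_cases hi : i < m
    · simp [outerReg, initState, hi, hdone i hi]
    · simp [outerReg, initState, hi, hfree i (by omega) 0]
  | aux i => exact hfree m le_rfl (i + 1)
  | out => exact hout

theorem AfterBlocks.exists_fallsThrough {n : ℕ} {b : Fin n → Bool} {v : ℕ → Bool} {k : ℕ}
    {s : RegState} (hs : AfterBlocks b v k s) {Y : List PInstr}
    (hY : ∀ u ∈ Y, InstrBasicOK BrBasic u) {t₁ : RegState}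
    (ht₁ : exec Y (initState n b) = some t₁) (hv : t₁ .out = v k) :
    ∃ t, FallsThrough (haltToJump (Y.map (PInstr.rename (blockReg k)))) s t ∧
      AfterBlocks b v (k + 1) t := by
  rw [← hs.comp_blockReg] at ht₁
  obtain ⟨t, hfall, htρ, hframe⟩ := exists_fallsThrough_rename (blockReg_injective k) ht₁
  obtain ⟨hinp, hout, hdone, hfree⟩ := hs
  refine ⟨t, hfall, fun i => ?_, ?_, fun j hj => ?_, fun j hj i => ?_⟩
  · calc t (.inp i) = t₁ (.inp i) := by rw [← htρ]; rfl
      _ = (s ∘ blockReg k) (.inp i) :=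
        exec_frame (fun u hu _ => PInstr.effect_inp_of_instrBasicOK (hY u hu) _ i) ht₁
      _ = _ := hinp i
  · rw [hframe _ (out_notMem_range_blockReg k), hout]
  · rcases (Nat.lt_succ_iff_lt_or_eq.mp hj) with hj | rfl
    · rw [hframe _ (aux_pair_notMem_range_blockReg hj.ne 0), hdone j hj]
    · rw [← hv, ← htρ]
      rfl
  · rw [hframe _ (aux_pair_notMem_range_blockReg (by omega) i), hfree j (by omega) i]

theorem exists_fallsThrough_blocks {n k : ℕ} {Y : ℕ → List PInstr}
    {w : ℕ → (Fin n → Bool) → Bool}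
    (hY : ∀ j < k, (∀ u ∈ Y j, InstrBasicOK BrBasic u) ∧ Computes (w j) (Y j))
    (b : Fin n → Bool) :
    ∃ t, FallsThrough (blocks Y k) (initState n b) t ∧ AfterBlocks b (fun j => w j b) k t := by
  induction k with
  | zero => exact ⟨_, FallsThrough.nil _, afterBlocks_zero b _⟩
  | succ k ih =>
    obtain ⟨s, hfall, hs⟩ := ih fun j hj => hY j (by omega)
    obtain ⟨hok, hcomp⟩ := hY k k.lt_succ_self
    obtain ⟨t₁, ht₁, hv⟩ := hcomp b
    obtain ⟨t, hfall', ht⟩ := hs.exists_fallsThrough hok ht₁ hv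
    exact ⟨t, hfall.append hfall', ht⟩

theorem exists_computes_comp {n m l : ℕ} {h : Fin m → (Fin n → Bool) → Bool}
    (hX : ∀ j, ∃ X, ISbr X ∧ Computes (h j) X ∧ X.length ≤ l) {g : (Fin m → Bool) → Bool}
    {Y : List PInstr} (hY : ISbr Y) (hg : Computes g Y) :
    ∃ Z, ISbr Z ∧ Computes (fun b => g fun j => h j b) Z ∧ Z.length ≤ m * l + Y.length := by
  choose X hXbr hXg hXl using hX
  let X' (j : ℕ) : List PInstr := if hj : j < m then X ⟨j, hj⟩ else []
  let h' (j : ℕ) : (Fin n → Bool) → Bool := if hj : j < m then h ⟨j, hj⟩ else fun _ => false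
  have hX' : ∀ j < m, (∀ u ∈ X' j, InstrBasicOK BrBasic u) ∧ Computes (h' j) (X' j) := by
    intro j hj
    simpa only [X', h', dif_pos hj] using ⟨(hXbr ⟨j, hj⟩).2, hXg ⟨j, hj⟩⟩
  refine ⟨blocks X' m ++ Y.map (PInstr.rename (outerReg m)), ⟨?_, ?_⟩, fun b => ?_, ?_⟩
  · simpa using fun _ => hY.1
  · simp only [List.mem_append, List.mem_map]
    rintro u (hu | ⟨v, hv, rfl⟩)
    · exact instrBasicOK_of_mem_blocks (fun j hj => (hX' j hj).1) u hu
    · exact v.instrBasicOK_rename (brBasic_rename_outerReg m) (hY.2 v hv)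
  · obtain ⟨s, hfall, hs⟩ := exists_fallsThrough_blocks hX' b
    obtain ⟨t₁, ht₁, hout⟩ := hg fun j => h j b
    have hs' : s ∘ outerReg m = initState m fun j => h j b := by
      rw [hs.comp_outerReg]
      simp only [h', Fin.is_lt, dif_pos]
    rw [← hs'] at ht₁
    obtain ⟨t, ht, htρ⟩ := exec_rename (outerReg_injective m) ht₁
    exact ⟨t, by rw [hfall, ht], by rw [← htρ] at hout; exact hout⟩
  · have := length_blocks_le (Y := X') (l := l) (k := m) fun j hj => by
      simpa only [X', dif_pos hj] using hXl ⟨j, hj⟩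
    simp only [List.length_append, List.length_map]
    omega

theorem computes_inp {n : ℕ} (j : Fin n) :
    Computes (fun b => b j) [.pos (.get (.inp j)), .plain (.set .out true), .halt] := by
  intro b
  have hj : initState n b (.inp j) = b j := dif_pos j.isLt
  cases hbj : b j
  · exact ⟨initState n b, by simp [exec, BInstr.isSplitReply, BInstr.rpl, BInstr.effect, hj, hbj],
      hbj.symm⟩
  · refine ⟨Function.update (initState n b) .out true, ?_, by simp [hbj]⟩
    simp [exec, BInstr.isSplitReply, BInstr.rpl, BInstr.effect, hj, hbj]

theorem lengthRed_self {n : ℕ} (f : (Fin n → Bool) → Bool) : LengthRed 3 f f := by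
  refine ⟨fun j b => b j, fun j => ⟨_, ⟨List.cons_ne_nil _ _, ?_⟩, computes_inp j, le_rfl⟩,
    fun _ => rfl⟩
  simp only [List.mem_cons, List.not_mem_nil, or_false]
  rintro u (rfl | rfl | rfl) <;> trivial

theorem LengthRed.trans {l₁ l₂ n m k : ℕ} {f : (Fin n → Bool) → Bool}
    {g : (Fin m → Bool) → Bool} {e : (Fin k → Bool) → Bool}
    (h₁ : LengthRed l₁ f g) (h₂ : LengthRed l₂ g e) : LengthRed (m * l₁ + l₂) f e := by
  obtain ⟨h₁, hX₁, hf⟩ := h₁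
  obtain ⟨h₂, hX₂, hg⟩ := h₂
  refine ⟨fun i b => h₂ i fun j => h₁ j b, fun i => ?_, fun b => by rw [hf, hg]⟩
  obtain ⟨Y, hY, hYc, hYl⟩ := hX₂ i
  obtain ⟨Z, hZ, hZc, hZl⟩ := exists_computes_comp hX₁ hY hYc
  exact ⟨Z, hZ, hZc, by omega⟩

theorem Polynomial.eval_mono_nat (p : Polynomial ℕ) {a b : ℕ} (h : a ≤ b) :
    p.eval a ≤ p.eval b := by
  rw [Polynomial.eval_eq_sum_range, Polynomial.eval_eq_sum_range]
  gcongr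

theorem PLRed.refl (F : (n : ℕ) → (Fin n → Bool) → Bool) : PLRed F F :=
  ⟨.X + .C 3, fun n => ⟨3, n, by simp, by simp, lengthRed_self (F n)⟩⟩

theorem PLRed.trans {F G H : (n : ℕ) → (Fin n → Bool) → Bool} (h₁ : PLRed F G)
    (h₂ : PLRed G H) : PLRed F H := by
  obtain ⟨q₁, hq₁⟩ := h₁
  obtain ⟨q₂, hq₂⟩ := h₂
  refine ⟨q₁ * q₁ + q₂.comp q₁, fun n => ?_⟩
  obtain ⟨l₁, m₁, hl₁, hm₁, hr₁⟩ := hq₁ n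
  obtain ⟨l₂, m₂, hl₂, hm₂, hr₂⟩ := hq₂ m₁
  have hq₂m₁ : q₂.eval m₁ ≤ q₂.eval (q₁.eval n) := q₂.eval_mono_nat hm₁
  have hm₁l₁ : m₁ * l₁ ≤ q₁.eval n * q₁.eval n := Nat.mul_le_mul hm₁ hl₁
  refine ⟨m₁ * l₁ + l₂, m₂, ?_, ?_, hr₁.trans hr₂⟩ <;>
    simp only [Polynomial.eval_add, Polynomial.eval_mul, Polynomial.eval_comp] <;> omega

/-- Proposition 1.2 of the paper: non-uniform polynomial-length reducibility
is reflexive and transitive. -/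
theorem statement9 :
    (∀ F : (n : ℕ) → (Fin n → Bool) → Bool, PLRed F F) ∧
    (∀ F G H : (n : ℕ) → (Fin n → Bool) → Bool,
      PLRed F G → PLRed G H → PLRed F H) :=
  ⟨PLRed.refl, fun _ _ _ => PLRed.trans⟩
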